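/- Let M ∈ GL(7,F₂) be an element of order 2 whose fixed-point space {v ∈ F₂⁷ : v·M = v} has dimension 6, and let C be a set of 3-dimensional F₂-linear subspaces of F₂⁷, any two distinct members of which intersect in a subspace of dimension at most 1, such that C is invariant under M. Then |C| ≤ 106. -/

import Mathlib

/-- The ambient vector space `F₂⁷`. -/
abbrev V : Type := Fin 7 → ZMod 2

/-- `GL(7,F₂)` acts on the subspaces of `F₂⁷` by mapping each subspace to its image
under the associated linear automorphism. -/
noncomputable instance : MulAction (GL (Fin 7) (ZMod 2)) (Submodule (ZMod 2) V) where
  smul M W := W.map (Matrix.mulVecLin (M : Matrix (Fin 7) (Fin 7) (ZMod 2)))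
  one_smul W := by
    show W.map _ = W
    simp
  mul_smul M N W := by
    show W.map _ = (W.map _).map _
    rw [← Submodule.map_comp]
    simp [Matrix.mulVecLin_mul]

/-- `C` is a `(7,4;3)₂` constant dimension code: a set of `3`-dimensional subspaces of `F₂⁷`
any two distinct members of which intersect in a subspace of dimension at most `1`. -/
def IsCode (C : Set (Submodule (ZMod 2) V)) : Prop :=
  (∀ W ∈ C, Module.finrank (ZMod 2) W = 3) ∧
  ∀ W₁ ∈ C, ∀ W₂ ∈ C, W₁ ≠ W₂ → Module.finrank (ZMod 2) ↥(W₁ ⊓ W₂) ≤ 1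

/-- The fixed-point space of `M ∈ GL(7,F₂)`: the eigenspace of `M` for the eigenvalue `1`,
i.e. the kernel of `M - I`. -/
noncomputable def fixedSpace (M : GL (Fin 7) (ZMod 2)) : Submodule (ZMod 2) V :=
  LinearMap.ker
    (Matrix.mulVecLin (M : Matrix (Fin 7) (Fin 7) (ZMod 2)) - LinearMap.id)

open Module Finset Matrix

/-!
Because `M` is an involution whose fixed space `H` is a hyperplane, `M - 1` has rank one and
squares to zero over `F₂`: `M` is a transvection `x ↦ x + f(x) v` with centre `v ∈ H`. Every
codeword meets `H` in dimension at least 2, so it shares a plane with its image and must be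
`M`-invariant; a codeword not inside `H` therefore contains `v`.

Three packings then bound the code. The codewords through `v` have disjoint sets of points
outside `{0, v}` (at most 21 codewords), those not inside `H` have disjoint sets of points
outside `H` (at most 16), and the codewords inside `H` have disjoint sets of ordered bases of
planes of `H` avoiding `v`, of which there are 42 in a codeword missing `v`, 24 in one containing
it and 3720 in `H`. Together these give `|C| ≤ 106`.
-/

theorem Finset.sum_card_le_card_of_pairwiseDisjoint {ι α : Type*} [DecidableEq α] {s : Finset ι}
    {t : ι → Finset α} {T : Finset α} (hd : (s : Set ι).PairwiseDisjoint t)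
    (hT : ∀ i ∈ s, t i ⊆ T) : ∑ i ∈ s, #(t i) ≤ #T := by
  rw [← card_biUnion hd]
  exact card_le_card (biUnion_subset.mpr hT)

theorem Finset.card_filter_offDiag_add_ne {G : Type*} [AddCommGroup G] [DecidableEq G]
    (s : Finset G) (v : G) (hs : ∀ x ∈ s, v - x ∈ s) (hv : ∀ x ∈ s, x + x ≠ v) :
    #{p ∈ s.offDiag | p.1 + p.2 ≠ v} = #s * (#s - 2) := by
  have hsum : {p ∈ s.offDiag | p.1 + p.2 = v} = s.image fun x => (x, v - x) := by
    ext ⟨x, y⟩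
    simp only [mem_filter, mem_offDiag, mem_image, Prod.mk.injEq]
    constructor
    · rintro ⟨⟨hx, -, -⟩, rfl⟩
      exact ⟨x, hx, rfl, add_sub_cancel_left x y⟩
    · rintro ⟨x, hx, rfl, rfl⟩
      refine ⟨⟨hx, hs x hx, fun h => hv x hx ?_⟩, add_sub_cancel x v⟩
      nth_rw 2 [h]
      exact add_sub_cancel x v
  have hcard := card_filter_add_card_filter_not (s := s.offDiag) (fun p => p.1 + p.2 = v)
  rw [hsum, card_image_of_injective _ fun x y h => congrArg Prod.fst h, offDiag_card] at hcard
  simp only [ne_eq]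
  rw [Nat.mul_sub, mul_two]
  omega

theorem Submodule.two_le_finrank_of_mem {E : Type*} [AddCommGroup E] [Module (ZMod 2) E]
    [Finite E] {U : Submodule (ZMod 2) E} {x y : E} (hx : x ∈ U) (hy : y ∈ U)
    (hx0 : x ≠ 0) (hy0 : y ≠ 0) (hxy : x ≠ y) : 2 ≤ finrank (ZMod 2) U := by
  have h3 : 3 ≤ Nat.card U := by
    have : ({0, x, y} : Set E).ncard = 3 :=
      Set.ncard_eq_three.mpr ⟨0, x, y, hx0.symm, hy0.symm, hxy, rfl⟩
    rw [← this, ← Nat.card_coe_set_eq]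
    refine Nat.card_mono (Set.toFinite _) ?_
    rintro z (rfl | rfl | rfl)
    exacts [U.zero_mem, hx, hy]
  rw [Module.natCard_eq_pow_finrank (K := ZMod 2), Nat.card_zmod] at h3
  by_contra! h
  interval_cases h : finrank (ZMod 2) U <;> simp_all

theorem Submodule.finrank_add_finrank_le_add_finrank_inf {K E : Type*} [DivisionRing K]
    [AddCommGroup E] [Module K E] [FiniteDimensional K E] (s t : Submodule K E) :
    finrank K s + finrank K t ≤ finrank K E + finrank K ↥(s ⊓ t) := by
  rw [← s.finrank_sup_add_finrank_inf_eq t]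
  have := (s ⊔ t).finrank_le
  omega

theorem Submodule.exists_ne_zero_forall_eq_of_finrank_eq_one {E : Type*} [AddCommGroup E]
    [Module (ZMod 2) E] {U : Submodule (ZMod 2) E} (hU : finrank (ZMod 2) U = 1) :
    ∃ v ∈ U, v ≠ 0 ∧ ∀ x ∈ U, x = 0 ∨ x = v := by
  obtain ⟨v, hv0, hv⟩ := finrank_eq_one_iff'.mp hU
  refine ⟨v, v.2, by simpa using hv0, fun x hx => ?_⟩
  obtain ⟨c, hc⟩ := hv ⟨x, hx⟩
  have hx' : x = c • (v : E) := by simpa using congrArg Subtype.val hc.symm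
  rcases (by decide : ∀ c : ZMod 2, c = 0 ∨ c = 1) c with rfl | rfl <;> simp [hx']

theorem mem_fixedSpace_iff {M : GL (Fin 7) (ZMod 2)} {x : V} :
    x ∈ fixedSpace M ↔ (M : Matrix (Fin 7) (Fin 7) (ZMod 2)) *ᵥ x = x := by
  simp [fixedSpace, sub_eq_zero]

theorem mulVec_mem_smul (M : GL (Fin 7) (ZMod 2)) {W : Submodule (ZMod 2) V} {x : V}
    (hx : x ∈ W) : (M : Matrix (Fin 7) (Fin 7) (ZMod 2)) *ᵥ x ∈ M • W :=
  Submodule.mem_map_of_mem hx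

theorem exists_mulVec_sub_eq_of_finrank_fixedSpace {M : GL (Fin 7) (ZMod 2)} (hM : orderOf M = 2)
    (hfix : finrank (ZMod 2) (fixedSpace M) = 6) :
    ∃ v ∈ fixedSpace M, v ≠ 0 ∧
      ∀ x ∉ fixedSpace M, (M : Matrix (Fin 7) (Fin 7) (ZMod 2)) *ᵥ x - x = v := by
  set φ := mulVecLin (M : Matrix (Fin 7) (Fin 7) (ZMod 2)) - LinearMap.id
  have hMM : (M : Matrix (Fin 7) (Fin 7) (ZMod 2)) * M = 1 := by
    have h := pow_orderOf_eq_one M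
    rw [hM, sq, Units.ext_iff] at h
    simpa using h
  have hφφ : ∀ x, φ (φ x) = 0 := fun x => by
    simp only [φ, LinearMap.sub_apply, mulVecLin_apply, LinearMap.id_apply,
      mulVec_sub, mulVec_mulVec, hMM, one_mulVec]
    rw [CharTwo.sub_eq_add, sub_add_sub_cancel, sub_self]
  have hrange : finrank (ZMod 2) (LinearMap.range φ) = 1 := by
    have := LinearMap.finrank_range_add_finrank_ker φ
    rw [show LinearMap.ker φ = fixedSpace M from rfl, hfix, finrank_fin_fun] at this
    omega
  obtain ⟨v, ⟨y, rfl⟩, hv0, hv⟩ := Submodule.exists_ne_zero_forall_eq_of_finrank_eq_one hrange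
  refine ⟨φ y, hφφ y, hv0, fun x hx => ?_⟩
  exact (hv (φ x) ⟨x, rfl⟩).resolve_left fun h => hx (LinearMap.mem_ker.mpr h)

namespace IsCode

variable {C : Set (Submodule (ZMod 2) V)}

theorem eq_of_mem_of_mem (hC : IsCode C) {W₁ W₂ : Submodule (ZMod 2) V} (h₁ : W₁ ∈ C)
    (h₂ : W₂ ∈ C) {x y : V} (hx₁ : x ∈ W₁) (hx₂ : x ∈ W₂) (hy₁ : y ∈ W₁) (hy₂ : y ∈ W₂)
    (hx : x ≠ 0) (hy : y ≠ 0) (hxy : x ≠ y) : W₁ = W₂ := by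
  by_contra hne
  have := Submodule.two_le_finrank_of_mem (U := W₁ ⊓ W₂) ⟨hx₁, hx₂⟩ ⟨hy₁, hy₂⟩ hx hy hxy
  have := hC.2 W₁ h₁ W₂ h₂ hne
  omega

theorem two_le_finrank_inf (hC : IsCode C) {W H : Submodule (ZMod 2) V} (hW : W ∈ C)
    (hH : finrank (ZMod 2) H = 6) : 2 ≤ finrank (ZMod 2) ↥(W ⊓ H) := by
  have := Submodule.finrank_add_finrank_le_add_finrank_inf W H
  rw [hC.1 W hW, hH, finrank_fin_fun] at this
  omega

theorem smul_eq_self (hC : IsCode C) {M : GL (Fin 7) (ZMod 2)}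
    (hfix : finrank (ZMod 2) (fixedSpace M) = 6) {W : Submodule (ZMod 2) V} (hW : W ∈ C)
    (hMW : M • W ∈ C) : M • W = W := by
  by_contra hne
  have hle : W ⊓ fixedSpace M ≤ W ⊓ M • W := fun _ ⟨hxW, hxH⟩ =>
    ⟨hxW, mem_fixedSpace_iff.mp hxH ▸ mulVec_mem_smul M hxW⟩
  have := hC.2 W hW (M • W) hMW (Ne.symm hne)
  have := (hC.two_le_finrank_inf hW hfix).trans (Submodule.finrank_mono hle)
  omega

end IsCode

theorem mem_of_not_le_fixedSpace {M : GL (Fin 7) (ZMod 2)} {W : Submodule (ZMod 2) V} {v : V}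
    (hW : M • W = W)
    (hv : ∀ x ∉ fixedSpace M, (M : Matrix (Fin 7) (Fin 7) (ZMod 2)) *ᵥ x - x = v)
    (hle : ¬W ≤ fixedSpace M) : v ∈ W := by
  obtain ⟨x, hxW, hxH⟩ := SetLike.not_le_iff_exists.mp hle
  rw [← hv x hxH]
  exact W.sub_mem (hW ▸ mulVec_mem_smul M hxW) hxW

open Classical in
noncomputable def points (W : Submodule (ZMod 2) V) : Finset V := {x | x ∈ W}

@[simp]
theorem mem_points {W : Submodule (ZMod 2) V} {x : V} : x ∈ points W ↔ x ∈ W := by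
  simp [points]

theorem points_mono {W H : Submodule (ZMod 2) V} (h : W ≤ H) : points W ⊆ points H :=
  fun _ hx => mem_points.mpr (h (mem_points.mp hx))

theorem points_inf (W H : Submodule (ZMod 2) V) : points (W ⊓ H) = points W ∩ points H := by
  ext x
  simp

theorem card_points (W : Submodule (ZMod 2) V) : #(points W) = 2 ^ finrank (ZMod 2) W := by
  classical
  have h := Module.natCard_eq_pow_finrank (K := ZMod 2) (V := W)
  rw [Nat.card_zmod] at h
  rw [← h, Nat.card_eq_fintype_card, Fintype.card_subtype]
  rfl

theorem pair_subset_points {W : Submodule (ZMod 2) V} {v : V} (hvW : v ∈ W) :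
    {0, v} ⊆ points W := by
  intro x hx
  rcases mem_insert.mp hx with rfl | hx
  · exact mem_points.mpr W.zero_mem
  · exact mem_points.mpr (mem_singleton.mp hx ▸ hvW)

theorem card_points_sdiff_of_mem {W : Submodule (ZMod 2) V} {v : V} (hv : v ≠ 0) (hvW : v ∈ W) :
    #(points W \ {0, v}) = 2 ^ finrank (ZMod 2) W - 2 := by
  rw [card_sdiff_of_subset (pair_subset_points hvW), card_pair hv.symm, card_points]

theorem card_points_sdiff_of_notMem {W : Submodule (ZMod 2) V} {v : V} (hvW : v ∉ W) :
    #(points W \ {0, v}) = 2 ^ finrank (ZMod 2) W - 1 := by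
  rw [sdiff_insert, sdiff_singleton_eq_erase, erase_eq_of_notMem (mt mem_points.mp hvW),
    card_erase_of_mem (mem_points.mpr W.zero_mem), card_points]

theorem card_points_sdiff_points (W H : Submodule (ZMod 2) V) :
    #(points W \ points H) = 2 ^ finrank (ZMod 2) W - 2 ^ finrank (ZMod 2) ↥(W ⊓ H) := by
  rw [card_sdiff, inter_comm, ← points_inf, card_points, card_points]

/-- For `v ≠ 0`, the ordered bases `(x, y)` of the 2-dimensional subspaces of `W` not
containing `v`. -/
noncomputable def pairsAvoiding (W : Submodule (ZMod 2) V) (v : V) : Finset (V × V) :=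
  {p ∈ (points W \ {0, v}).offDiag | p.1 + p.2 ≠ v}

theorem pairsAvoiding_mono {W H : Submodule (ZMod 2) V} (h : W ≤ H) (v : V) :
    pairsAvoiding W v ⊆ pairsAvoiding H v :=
  filter_subset_filter _ (offDiag_mono (sdiff_subset_sdiff (points_mono h) subset_rfl))

theorem card_pairsAvoiding_of_mem {W : Submodule (ZMod 2) V} {v : V} (hv : v ≠ 0) (hvW : v ∈ W) :
    #(pairsAvoiding W v) = (2 ^ finrank (ZMod 2) W - 2) * (2 ^ finrank (ZMod 2) W - 4) := by
  rw [pairsAvoiding, card_filter_offDiag_add_ne, card_points_sdiff_of_mem hv hvW, Nat.sub_sub]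
  · intro x hx
    simp only [mem_sdiff, mem_points, mem_insert, mem_singleton, not_or] at hx ⊢
    exact ⟨W.sub_mem hvW hx.1, sub_ne_zero.mpr (Ne.symm hx.2.2), by simpa using hx.2.1⟩
  · intro x _
    rw [CharTwo.add_self_eq_zero]
    exact hv.symm

theorem card_pairsAvoiding_of_notMem {W : Submodule (ZMod 2) V} {v : V} (hvW : v ∉ W) :
    #(pairsAvoiding W v) = (2 ^ finrank (ZMod 2) W - 1) * (2 ^ finrank (ZMod 2) W - 2) := by
  rw [pairsAvoiding, filter_true_of_mem, offDiag_card, card_points_sdiff_of_notMem hvW,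
    ← Nat.mul_sub_one, Nat.sub_sub]
  intro p hp
  simp only [mem_offDiag, mem_sdiff, mem_points] at hp
  exact fun h => hvW (h ▸ W.add_mem hp.1.1 hp.2.1.1)

namespace IsCode

variable {C : Set (Submodule (ZMod 2) V)} {s : Finset (Submodule (ZMod 2) V)} {v : V}

theorem pairwiseDisjoint_points_sdiff (hC : IsCode C) (hv : v ≠ 0)
    (hs : ∀ W ∈ s, W ∈ C ∧ v ∈ W) :
    (s : Set (Submodule (ZMod 2) V)).PairwiseDisjoint fun W => points W \ {0, v} := by
  intro W₁ h₁ W₂ h₂ hne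
  refine disjoint_left.mpr fun x hx₁ hx₂ => hne ?_
  simp only [mem_sdiff, mem_points, mem_insert, mem_singleton, not_or] at hx₁ hx₂
  exact hC.eq_of_mem_of_mem (hs W₁ h₁).1 (hs W₂ h₂).1 hx₁.1 hx₂.1 (hs W₁ h₁).2 (hs W₂ h₂).2
    hx₁.2.1 hv hx₁.2.2

theorem pairwiseDisjoint_pairsAvoiding (hC : IsCode C) (hs : ∀ W ∈ s, W ∈ C) :
    (s : Set (Submodule (ZMod 2) V)).PairwiseDisjoint fun W => pairsAvoiding W v := by
  intro W₁ h₁ W₂ h₂ hne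
  refine disjoint_left.mpr fun p hp₁ hp₂ => hne ?_
  simp only [pairsAvoiding, mem_filter, mem_offDiag, mem_sdiff, mem_points, mem_insert,
    mem_singleton, not_or] at hp₁ hp₂
  exact hC.eq_of_mem_of_mem (hs W₁ h₁) (hs W₂ h₂) hp₁.1.1.1 hp₂.1.1.1 hp₁.1.2.1.1 hp₂.1.2.1.1
    hp₁.1.1.2.1 hp₁.1.2.1.2.1 hp₁.1.2.2

theorem card_mul_six_le_of_mem (hC : IsCode C) (hv : v ≠ 0) (hs : ∀ W ∈ s, W ∈ C ∧ v ∈ W) :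
    #s * 6 ≤ 126 :=
  calc #s * 6 = ∑ W ∈ s, #(points W \ {0, v}) := by
        refine (sum_const_nat fun W hW => ?_).symm
        rw [card_points_sdiff_of_mem hv (hs W hW).2, hC.1 W (hs W hW).1]
        rfl
    _ ≤ #(points ⊤ \ {0, v}) :=
        sum_card_le_card_of_pairwiseDisjoint (hC.pairwiseDisjoint_points_sdiff hv hs)
          fun W _ => sdiff_subset_sdiff (points_mono le_top) subset_rfl
    _ = 126 := by
        rw [card_points_sdiff_of_mem hv Submodule.mem_top, finrank_top, finrank_fin_fun]
        rfl

theorem card_mul_four_le_of_not_le (hC : IsCode C) {H : Submodule (ZMod 2) V}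
    (hH : finrank (ZMod 2) H = 6) (hv : v ≠ 0) (hvH : v ∈ H)
    (hs : ∀ W ∈ s, W ∈ C ∧ v ∈ W ∧ ¬W ≤ H) : #s * 4 ≤ 64 := by
  calc #s * 4 = ∑ W ∈ s, #(points W \ points H) := by
        refine (sum_const_nat fun W hW => ?_).symm
        obtain ⟨hWC, -, hWH⟩ := hs W hW
        have hlt : finrank (ZMod 2) ↥(W ⊓ H) < 3 := hC.1 W hWC ▸
          Submodule.finrank_lt_finrank_of_lt (inf_le_left.lt_of_ne (mt inf_eq_left.mp hWH))
        have := hC.two_le_finrank_inf hWC hH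
        rw [card_points_sdiff_points, hC.1 W hWC, show finrank (ZMod 2) ↥(W ⊓ H) = 2 by omega]
        rfl
    _ ≤ #(points ⊤ \ points H) :=
        sum_card_le_card_of_pairwiseDisjoint
          ((hC.pairwiseDisjoint_points_sdiff hv fun W hW => ⟨(hs W hW).1, (hs W hW).2.1⟩).mono_on
            fun W _ => sdiff_subset_sdiff subset_rfl (pair_subset_points hvH))
          fun W _ => sdiff_subset_sdiff (points_mono le_top) subset_rfl
    _ = 64 := by
        rw [card_points_sdiff_points, top_inf_eq, finrank_top, finrank_fin_fun, hH]
        rfl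

open Classical in
theorem card_weighted_le_of_le (hC : IsCode C) {H : Submodule (ZMod 2) V}
    (hH : finrank (ZMod 2) H = 6) (hv : v ≠ 0) (hvH : v ∈ H) (hs : ∀ W ∈ s, W ∈ C ∧ W ≤ H) :
    42 * #{W ∈ s | v ∉ W} + 24 * #{W ∈ s | v ∈ W} ≤ 3720 :=
  calc 42 * #{W ∈ s | v ∉ W} + 24 * #{W ∈ s | v ∈ W} = ∑ W ∈ s, #(pairsAvoiding W v) := by
        rw [← sum_filter_not_add_sum_filter s (v ∈ ·), sum_const_nat, sum_const_nat,
          mul_comm 42, mul_comm 24]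
        · intro W hW
          rw [mem_filter] at hW
          rw [card_pairsAvoiding_of_mem hv hW.2, hC.1 W (hs W hW.1).1]
          rfl
        · intro W hW
          rw [mem_filter] at hW
          rw [card_pairsAvoiding_of_notMem hW.2, hC.1 W (hs W hW.1).1]
          rfl
    _ ≤ #(pairsAvoiding H v) :=
        sum_card_le_card_of_pairwiseDisjoint
          (hC.pairwiseDisjoint_pairsAvoiding fun W hW => (hs W hW).1)
          fun W hW => pairsAvoiding_mono (hs W hW).2 v
    _ = 3720 := by
        rw [card_pairsAvoiding_of_mem hv hvH, hH]
        rfl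

end IsCode

open Classical in
theorem IsCode.card_le_106 {C : Set (Submodule (ZMod 2) V)} (hC : IsCode C)
    {H : Submodule (ZMod 2) V} (hH : finrank (ZMod 2) H = 6) {v : V} (hv : v ≠ 0) (hvH : v ∈ H)
    {s : Finset (Submodule (ZMod 2) V)} (hs : ∀ W ∈ s, W ∈ C)
    (hcenter : ∀ W ∈ s, ¬W ≤ H → v ∈ W) : #s ≤ 106 := by
  set inside := {W ∈ s | W ≤ H}
  set outside := {W ∈ s | ¬W ≤ H}
  have hin := hC.card_weighted_le_of_le hH hv hvH (s := inside) fun W hW => by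
    rw [mem_filter] at hW
    exact ⟨hs W hW.1, hW.2⟩
  have hthrough := hC.card_mul_six_le_of_mem hv (s := {W ∈ inside | v ∈ W} ∪ outside) fun W hW => by
    simp only [mem_union, mem_filter, inside, outside] at hW
    rcases hW with ⟨⟨hW, -⟩, hvW⟩ | ⟨hW, hWH⟩
    exacts [⟨hs W hW, hvW⟩, ⟨hs W hW, hcenter W hW hWH⟩]
  have hout := hC.card_mul_four_le_of_not_le hH hv hvH (s := outside) fun W hW => by
    rw [mem_filter] at hW
    exact ⟨hs W hW.1, hcenter W hW.1 hW.2, hW.2⟩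
  have hdisj : Disjoint {W ∈ inside | v ∈ W} outside :=
    (disjoint_filter_filter_not s s (· ≤ H)).mono_left (filter_subset _ _)
  rw [card_union_of_disjoint hdisj] at hthrough
  have hsplit : #inside + #outside = #s := card_filter_add_card_filter_not _
  have hsplit_inside : #{W ∈ inside | v ∉ W} + #{W ∈ inside | v ∈ W} = #inside := by
    simpa only [not_not] using card_filter_add_card_filter_not (s := inside) (v ∉ ·)
  omega

/-- A `(7,4;3)₂` code invariant under an element of order 2 of `GL(7,F₂)` with
6-dimensional fixed-point space has at most 106 codewords. -/
theorem stmt_17 (M : GL (Fin 7) (ZMod 2)) (hM : orderOf M = 2)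
    (hfix : Module.finrank (ZMod 2) (fixedSpace M) = 6)
    (C : Set (Submodule (ZMod 2) V)) (hC : IsCode C)
    (hInv : ∀ W ∈ C, M • W ∈ C) :
    C.ncard ≤ 106 := by
  classical
  obtain ⟨v, hvH, hv, hcenter⟩ := exists_mulVec_sub_eq_of_finrank_fixedSpace hM hfix
  rw [Set.ncard_eq_toFinset_card']
  refine hC.card_le_106 hfix hv hvH (fun W hW => Set.mem_toFinset.mp hW)
    fun W hW hWH => ?_
  rw [Set.mem_toFinset] at hW
  exact mem_of_not_le_fixedSpace (hC.smul_eq_self hfix hW (hInv W hW)) hcenter hWH
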